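/- Let m ≥ 3 and let P_2 □ F_m be the Cartesian product of the path P_2 = [u_1, u_2] with the fan graph F_m (a graph of order 2(m+1)). Then for each i ∈ {1,2}, the harmonic centrality of (u_i, v_0) (v_0 the hub of the fan) equals (3m+2)/(2(2m+1)); the harmonic centrality of (u_i, v_1) and of (u_i, v_m) equals (5m+14)/(6(2m+1)); and the harmonic centrality of (u_i, v_j) for 1 < j < m equals (5m+18)/(6(2m+1)). -/

import Mathlib

open SimpleGraph Finset

/-- The harmonic centrality of a vertex `u` in a graph `G` of order `N`:
`(1/(N-1)) * Σ_{x ≠ u} 1/d(u,x)`, where `1/d(u,x) = 0` when there is no path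
(Mathlib's `SimpleGraph.dist` is `0` for unreachable pairs, and `1/0 = 0` in `ℝ`). -/
noncomputable def harmonicCentrality {V : Type*} [Fintype V] [DecidableEq V]
    (G : SimpleGraph V) (u : V) : ℝ :=
  (∑ x ∈ Finset.univ.erase u, (1 : ℝ) / (G.dist u x)) / ((Fintype.card V : ℝ) - 1)

/-- The harmonic centralization of a graph `G` of order `N`:
`(Σ_u (Hmax - H_G(u))) / ((N-2)/2)` where `Hmax` is the largest harmonic centrality. -/
noncomputable def harmonicCentralization {V : Type*} [Fintype V] [DecidableEq V]
    (G : SimpleGraph V) : ℝ :=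
  (∑ u : V, ((⨆ v : V, harmonicCentrality G v) - harmonicCentrality G u)) /
    (((Fintype.card V : ℝ) - 2) / 2)

/-- The fan graph `F_m`: the join of a hub vertex (`none`) with the path `P_m`. -/
def fanGraph (m : ℕ) : SimpleGraph (Option (Fin m)) :=
  SimpleGraph.fromRel (fun x y =>
    x = none ∨ ∃ a b : Fin m, x = some a ∧ y = some b ∧ (SimpleGraph.pathGraph m).Adj a b)

/-- The direct (tensor) product of two simple graphs. -/
def tensorProd {α β : Type*} (G : SimpleGraph α) (H : SimpleGraph β) :
    SimpleGraph (α × β) where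
  Adj x y := G.Adj x.1 y.1 ∧ H.Adj x.2 y.2
  symm := ⟨fun x y h => ⟨h.1.symm, h.2.symm⟩⟩
  loopless := ⟨fun x h => G.irrefl h.1⟩

lemma walk_length_ge {α β : Type*} {G : SimpleGraph α} {H : SimpleGraph β}
    (hG : G.Connected) (hH : H.Connected) {x y : α × β} (w : (G.boxProd H).Walk x y) :
    G.dist x.1 y.1 + H.dist x.2 y.2 ≤ w.length := by
  induction w with
  | nil => simp
  | @cons a b c h p ih =>
    rw [Walk.length_cons]
    rcases h with ⟨h1, h2⟩ | ⟨h1, h2⟩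
    · have : G.dist a.1 c.1 ≤ 1 + G.dist b.1 c.1 := by
        calc G.dist a.1 c.1 ≤ G.dist a.1 b.1 + G.dist b.1 c.1 := hG.dist_triangle
        _ ≤ 1 + G.dist b.1 c.1 := by
            have := G.dist_le h1.toWalk
            simp only [Walk.length_cons, Walk.length_nil] at this
            omega
      rw [h2]; omega
    · have : H.dist a.2 c.2 ≤ 1 + H.dist b.2 c.2 := by
        calc H.dist a.2 c.2 ≤ H.dist a.2 b.2 + H.dist b.2 c.2 := hH.dist_triangle
        _ ≤ 1 + H.dist b.2 c.2 := by
            have := H.dist_le h1.toWalk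
            simp only [Walk.length_cons, Walk.length_nil] at this
            omega
      rw [h2]; omega

lemma boxProd_dist {α β : Type*} {G : SimpleGraph α} {H : SimpleGraph β}
    (hG : G.Connected) (hH : H.Connected) (x y : α × β) :
    (G.boxProd H).dist x y = G.dist x.1 y.1 + H.dist x.2 y.2 := by
  refine le_antisymm ?_ ?_
  · obtain ⟨p, hp⟩ := hG.exists_walk_length_eq_dist x.1 y.1
    obtain ⟨q, hq⟩ := hH.exists_walk_length_eq_dist x.2 y.2
    have hw : ((p.boxProdLeft H x.2).append (q.boxProdRight G y.1) :
        (G.boxProd H).Walk (x.1, x.2) (y.1, y.2)).length = G.dist x.1 y.1 + H.dist x.2 y.2 := by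
      rw [Walk.length_append]
      exact congrArg₂ (· + ·) ((Walk.length_map _ p).trans hp) ((Walk.length_map _ q).trans hq)
    have := (G.boxProd H).dist_le ((p.boxProdLeft H x.2).append (q.boxProdRight G y.1))
    rw [hw] at this
    exact this
  · rcases Nat.eq_zero_or_pos ((G.boxProd H).dist x y) with h | h
    · rw [dist_eq_zero_iff_eq_or_not_reachable] at h
      rcases h with rfl | h
      · simp [SimpleGraph.dist_self]
      · exact absurd ((hG.boxProd hH) x y) h
    · obtain ⟨w, hw⟩ := (Reachable.of_dist_ne_zero (Nat.pos_iff_ne_zero.mp h)).exists_walk_length_eq_dist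
      rw [← hw]
      exact walk_length_ge hG hH w

lemma fan_adj_hub {m : ℕ} (k : Fin m) : (fanGraph m).Adj none (some k) := by
  simp [fanGraph, SimpleGraph.fromRel_adj]

lemma fan_adj_some {m : ℕ} {a b : Fin m} :
    (fanGraph m).Adj (some a) (some b) ↔ (SimpleGraph.pathGraph m).Adj a b := by
  simp only [fanGraph, SimpleGraph.fromRel_adj]
  constructor
  · rintro ⟨hne, h | h⟩ <;> rcases h with h | ⟨a', b', h1, h2, h3⟩ <;>
      first
      | simp at h
      | (simp only [Option.some.injEq] at h1 h2; subst h1; subst h2;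
         first | exact h3 | exact h3.symm)
  · intro h
    exact ⟨by simp [h.ne], Or.inl (Or.inr ⟨a, b, rfl, rfl, h⟩)⟩

lemma fan_connected (m : ℕ) : (fanGraph m).Connected := by
  have hre : ∀ x : Option (Fin m), (fanGraph m).Reachable none x := by
    rintro (_ | k)
    · exact Reachable.refl _
    · exact (fan_adj_hub k).reachable
  have : Nonempty (Option (Fin m)) := ⟨none⟩
  exact SimpleGraph.Connected.mk (fun x y => (hre x).symm.trans (hre y))

lemma fan_dist_hub {m : ℕ} (k : Fin m) : (fanGraph m).dist none (some k) = 1 :=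
  SimpleGraph.dist_eq_one_iff_adj.mpr (fan_adj_hub k)

lemma fan_dist_hub' {m : ℕ} (k : Fin m) : (fanGraph m).dist (some k) none = 1 := by
  rw [SimpleGraph.dist_comm]; exact fan_dist_hub k

lemma fan_dist_some {m : ℕ} (a b : Fin m) :
    (fanGraph m).dist (some a) (some b) =
      if a = b then 0 else
        if a.val + 1 = b.val ∨ b.val + 1 = a.val then 1 else 2 := by
  split_ifs with h1 h2
  · subst h1; exact SimpleGraph.dist_self
  · exact SimpleGraph.dist_eq_one_iff_adj.mpr
      (fan_adj_some.mpr (SimpleGraph.pathGraph_adj.mpr h2))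
  · have hle : (fanGraph m).dist (some a) (some b) ≤ 2 := by
      have := (fanGraph m).dist_le
        (Walk.cons ((fan_adj_hub a).symm) (Walk.cons (fan_adj_hub b) Walk.nil))
      simpa using this
    have hne0 : (fanGraph m).dist (some a) (some b) ≠ 0 := by
      intro h
      have := ((fan_connected m).dist_eq_zero_iff).mp h
      simp only [Option.some.injEq] at this
      exact h1 this
    have hne1 : (fanGraph m).dist (some a) (some b) ≠ 1 := by
      intro h
      rw [SimpleGraph.dist_eq_one_iff_adj, fan_adj_some, SimpleGraph.pathGraph_adj] at h
      exact h2 h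
    omega

lemma path2_dist (i a : Fin 2) :
    (SimpleGraph.pathGraph 2).dist i a = if i = a then 0 else 1 := by
  split_ifs with h
  · subst h; exact SimpleGraph.dist_self
  · refine SimpleGraph.dist_eq_one_iff_adj.mpr (SimpleGraph.pathGraph_adj.mpr ?_)
    omega

def dfan (m : ℕ) : Option (Fin m) → Option (Fin m) → ℕ
  | none, none => 0
  | none, some _ => 1
  | some _, none => 1
  | some a, some b =>
      if a = b then 0 else if a.val + 1 = b.val ∨ b.val + 1 = a.val then 1 else 2

lemma fan_dist_eq {m : ℕ} (x y : Option (Fin m)) : (fanGraph m).dist x y = dfan m x y := by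
  cases x <;> cases y <;>
    simp [dfan, SimpleGraph.dist_self, fan_dist_hub, fan_dist_hub', fan_dist_some]

lemma pf_dist {m : ℕ} (x y : Fin 2 × Option (Fin m)) :
    ((SimpleGraph.pathGraph 2).boxProd (fanGraph m)).dist x y
      = (if x.1 = y.1 then 0 else 1) + dfan m x.2 y.2 := by
  rw [boxProd_dist (SimpleGraph.pathGraph_connected 1) (fan_connected m), path2_dist, fan_dist_eq]

lemma sum_fin_near {m : ℕ} (p : Fin m) (h0 h1 h2 : ℝ) :
    ∑ k : Fin m, (if k = p then h0
        else if p.val + 1 = k.val ∨ k.val + 1 = p.val then h1 else h2)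
      = m * h2 + (h0 - h2) + (if p.val + 1 < m then h1 - h2 else 0)
        + (if 0 < p.val then h1 - h2 else 0) := by
  have hpt : ∀ k : Fin m,
      (if k = p then h0 else if p.val + 1 = k.val ∨ k.val + 1 = p.val then h1 else h2)
      = h2 + (if k = p then h0 - h2 else 0) + (if k.val = p.val + 1 then h1 - h2 else 0)
        + (if k.val + 1 = p.val then h1 - h2 else 0) := by
    intro k
    simp only [Fin.ext_iff]
    split_ifs <;> first | ring1 | (exfalso; omega)
  rw [Finset.sum_congr rfl fun k _ => hpt k]
  rw [Finset.sum_add_distrib, Finset.sum_add_distrib, Finset.sum_add_distrib]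
  have s1 : ∑ _k : Fin m, h2 = m * h2 := by
    simp [Finset.sum_const, mul_comm]
  have s2 : ∑ k : Fin m, (if k = p then h0 - h2 else 0) = h0 - h2 := by
    simp [Finset.sum_ite_eq']
  have s3 : ∑ k : Fin m, (if k.val = p.val + 1 then h1 - h2 else 0)
      = (if p.val + 1 < m then h1 - h2 else 0) := by
    by_cases h : p.val + 1 < m
    · have he : ∀ k : Fin m, (k.val = p.val + 1) ↔ k = ⟨p.val + 1, h⟩ := by
        intro k; rw [Fin.ext_iff]
      simp only [he]
      simp [Finset.sum_ite_eq', h]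
    · rw [if_neg h]
      apply Finset.sum_eq_zero
      intro k _
      rw [if_neg]
      have := k.isLt
      omega
  have s4 : ∑ k : Fin m, (if k.val + 1 = p.val then h1 - h2 else 0)
      = (if 0 < p.val then h1 - h2 else 0) := by
    by_cases h : 0 < p.val
    · have hlt : p.val - 1 < m := by have := p.isLt; omega
      have he : ∀ k : Fin m, (k.val + 1 = p.val) ↔ k = ⟨p.val - 1, hlt⟩ := by
        intro k; rw [Fin.ext_iff]; constructor <;> (intro; simp_all; omega)
      simp only [he]
      simp [Finset.sum_ite_eq', h]
    · rw [if_neg h]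
      apply Finset.sum_eq_zero
      intro k _
      rw [if_neg]
      omega
  rw [s1, s2, s3, s4]

lemma sum_fin2 (i : Fin 2) (g : ℕ → ℝ) :
    ∑ a : Fin 2, g (if i = a then 0 else 1) = g 0 + g 1 := by
  fin_cases i <;> simp [Fin.sum_univ_two] <;> exact add_comm _ _

lemma inner_hub (m c : ℕ) :
    ∑ b : Option (Fin m), (1:ℝ) / ((c : ℝ) + (dfan m none b : ℕ))
      = 1/(c:ℝ) + m * (1/((c:ℝ)+1)) := by
  rw [Fintype.sum_option]
  simp [dfan, Finset.sum_const, mul_comm]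

lemma inner_some (m : ℕ) (p : Fin m) (c : ℕ) :
    ∑ b : Option (Fin m), (1:ℝ) / ((c:ℝ) + (dfan m (some p) b : ℕ))
      = 1/((c:ℝ)+1) + (m * (1/((c:ℝ)+2)) + (1/(c:ℝ) - 1/((c:ℝ)+2))
        + (if p.val + 1 < m then 1/((c:ℝ)+1) - 1/((c:ℝ)+2) else 0)
        + (if 0 < p.val then 1/((c:ℝ)+1) - 1/((c:ℝ)+2) else 0)) := by
  rw [Fintype.sum_option]
  congr 1
  · simp [dfan]
  · have hk : ∀ k : Fin m, (1:ℝ)/((c:ℝ) + (dfan m (some p) (some k) : ℕ))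
        = (if k = p then 1/(c:ℝ)
          else if p.val + 1 = k.val ∨ k.val + 1 = p.val then 1/((c:ℝ)+1) else 1/((c:ℝ)+2)) := by
      intro k
      rcases eq_or_ne k p with rfl | h1
      · simp [dfan]
      · by_cases h2 : p.val + 1 = k.val ∨ k.val + 1 = p.val
        · simp [dfan, h1, Ne.symm h1, h2]
        · simp [dfan, h1, Ne.symm h1, h2]
    rw [Finset.sum_congr rfl fun k _ => hk k, sum_fin_near]

lemma S_hub (m : ℕ) (i : Fin 2) :
    ∑ x : Fin 2 × Option (Fin m),
        (1:ℝ) / (((SimpleGraph.pathGraph 2).boxProd (fanGraph m)).dist (i, none) x)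
      = 3*(m:ℝ)/2 + 1 := by
  rw [Fintype.sum_prod_type]
  set g : ℕ → ℝ := fun c => 1/(c:ℝ) + m * (1/((c:ℝ)+1)) with hg
  have h1 : ∀ a : Fin 2, (∑ b : Option (Fin m),
      (1:ℝ) / (((SimpleGraph.pathGraph 2).boxProd (fanGraph m)).dist (i, none) (a, b)))
      = g (if i = a then 0 else 1) := by
    intro a
    simp only [pf_dist, Nat.cast_add, hg]
    exact inner_hub m _
  rw [Finset.sum_congr rfl fun a _ => h1 a, sum_fin2 i g]
  simp only [hg]
  norm_num
  ring

lemma S_some (m : ℕ) (i : Fin 2) (p : Fin m) :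
    ∑ x : Fin 2 × Option (Fin m),
        (1:ℝ) / (((SimpleGraph.pathGraph 2).boxProd (fanGraph m)).dist (i, some p) x)
      = 5*(m:ℝ)/6 + 5/3
        + ((if p.val + 1 < m then (1:ℝ) else 0) + (if 0 < p.val then (1:ℝ) else 0)) * (2/3) := by
  rw [Fintype.sum_prod_type]
  set g : ℕ → ℝ := fun c => 1/((c:ℝ)+1) + (m * (1/((c:ℝ)+2)) + (1/(c:ℝ) - 1/((c:ℝ)+2))
          + (if p.val + 1 < m then 1/((c:ℝ)+1) - 1/((c:ℝ)+2) else 0)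
          + (if 0 < p.val then 1/((c:ℝ)+1) - 1/((c:ℝ)+2) else 0)) with hg
  have h1 : ∀ a : Fin 2, (∑ b : Option (Fin m),
      (1:ℝ) / (((SimpleGraph.pathGraph 2).boxProd (fanGraph m)).dist (i, some p) (a, b)))
      = g (if i = a then 0 else 1) := by
    intro a
    simp only [pf_dist, Nat.cast_add, hg]
    exact inner_some m p _
  rw [Finset.sum_congr rfl fun a _ => h1 a, sum_fin2 i g]
  simp only [hg]
  by_cases hR : p.val + 1 < m <;> by_cases hL : 0 < p.val <;>
    simp only [hR, hL, if_true, if_false] <;> norm_num <;> ring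

/-- Theorem 3.3: harmonic centrality of vertices of `P₂ □ Fₘ`
(the hub `v₀` of the fan is `none`; vertex `v_j` of the path part is `some ⟨j-1, _⟩`). -/
theorem harmonicCentrality_boxProd_path_fan (m : ℕ) (hm : 3 ≤ m) (i : Fin 2) :
    (harmonicCentrality ((SimpleGraph.pathGraph 2).boxProd (fanGraph m)) (i, none) =
      (3 * (m : ℝ) + 2) / (2 * (2 * (m : ℝ) + 1))) ∧
    (∀ (j : ℕ) (hj1 : 1 ≤ j) (hjm : j ≤ m),
      ((j = 1 ∨ j = m) →
        harmonicCentrality ((SimpleGraph.pathGraph 2).boxProd (fanGraph m))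
          (i, some ⟨j - 1, by omega⟩) =
        (5 * (m : ℝ) + 14) / (6 * (2 * (m : ℝ) + 1))) ∧
      ((1 < j ∧ j < m) →
        harmonicCentrality ((SimpleGraph.pathGraph 2).boxProd (fanGraph m))
          (i, some ⟨j - 1, by omega⟩) =
        (5 * (m : ℝ) + 18) / (6 * (2 * (m : ℝ) + 1)))) := by

  have hc : (Fintype.card (Fin 2 × Option (Fin m)) : ℝ) = 2 * ((m:ℝ) + 1) := by
    rw [Fintype.card_prod, Fintype.card_option, Fintype.card_fin, Fintype.card_fin]
    push_cast; ring
  have hm0 : 2 * ((m:ℝ) + 1) - 1 ≠ 0 := by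
    have : (3:ℝ) ≤ (m:ℝ) := by exact_mod_cast hm
    nlinarith
  have hm1 : 2 * (m:ℝ) + 1 ≠ 0 := by
    have : (3:ℝ) ≤ (m:ℝ) := by exact_mod_cast hm
    nlinarith
  constructor
  · unfold harmonicCentrality
    rw [Finset.sum_erase _ (by simp [SimpleGraph.dist_self]), S_hub m i, hc]
    field_simp
    ring_nf
  · intro j hj1 hjm
    constructor
    · intro hcase
      unfold harmonicCentrality
      rw [Finset.sum_erase _ (by simp [SimpleGraph.dist_self]),
        S_some m i ⟨j - 1, by omega⟩, hc]
      have hval : ((⟨j - 1, by omega⟩ : Fin m) : ℕ) = j - 1 := rfl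
      rcases hcase with rfl | rfl
      · rw [hval, if_pos (by omega), if_neg (by omega)]
        field_simp
        ring
      · rw [hval, if_neg (by omega), if_pos (by omega)]
        field_simp
        ring
    · rintro ⟨h1, h2⟩
      unfold harmonicCentrality
      rw [Finset.sum_erase _ (by simp [SimpleGraph.dist_self]),
        S_some m i ⟨j - 1, by omega⟩, hc]
      have hval : ((⟨j - 1, by omega⟩ : Fin m) : ℕ) = j - 1 := rfl
      rw [hval, if_pos (by omega), if_pos (by omega)]
      field_simp
      ring
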